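/- Let D be the number of deleted edges of Γ with respect to T. Then every critical cell c of UD^nΓ satisfies dim c ≤ ⌊(n+D)/2⌋; equivalently, since D = 1 − χ(Γ) where χ(Γ) is the Euler characteristic of Γ, dim c ≤ ⌊(n+1−χ(Γ))/2⌋. -/

import Mathlib

open SimpleGraph

attribute [local instance] Classical.propDecidable

namespace GraphBraid

/-- The degree of a vertex, defined via `Set.ncard` to avoid decidability assumptions. -/
noncomputable def ncdeg {V : Type} (H : SimpleGraph V) (v : V) : ℕ := (H.neighborSet v).ncard

/-- The basic setup: a finite connected simple graph `G` with a spanning tree `T`,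
a root `root` of degree one in `T`, and a labelling of the edges of `T` incident to each
vertex `u` by the numbers `0, …, d_T(u) - 1`, where the edge towards the root receives the
label `0` (and the unique edge at the root receives the label `1`). -/
structure Setup (V : Type) [Fintype V] [DecidableEq V] where
  G : SimpleGraph V
  G_conn : G.Connected
  T : SimpleGraph V
  T_le : T ≤ G
  T_tree : T.IsTree
  root : V
  root_deg : ncdeg T root = 1
  label : V → V → ℕ
  label_bij : ∀ u : V, u ≠ root → Set.BijOn (label u) (T.neighborSet u) (Set.Iio (ncdeg T u))
  label_zero : ∀ u : V, u ≠ root → ∀ w : V, T.Adj u w →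
    (label u w = 0 ↔ T.dist root w + 1 = T.dist root u)
  label_root : ∀ w : V, T.Adj root w → label root w = 1

namespace Setup

variable {V : Type} [Fintype V] [DecidableEq V] (S : Setup V)

/-- The unique geodesic (path) in the tree `T` from `u` to `w`. -/
noncomputable def geod (u w : V) : S.T.Walk u w := (S.T_tree.existsUnique_path u w).choose

/-- `g(u,w)`: the label at `u` of the first edge of the tree geodesic from `u` to `w`,
with `g(u,u) = 0`. -/
noncomputable def gfun (u w : V) : ℕ :=
  if u = w then 0 else S.label u ((S.geod u w).getVert 1)

lemma exists_wedge (u w : V) :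
    ∃ x : V, (x ∈ (S.geod S.root u).support ∧ x ∈ (S.geod S.root w).support) ∧
      ∀ y : V, y ∈ (S.geod S.root u).support → y ∈ (S.geod S.root w).support →
        S.T.dist S.root y ≤ S.T.dist S.root x := by
  classical
  have hne : ((S.geod S.root u).support.toFinset ∩
      (S.geod S.root w).support.toFinset).Nonempty :=
    ⟨S.root, by simp [SimpleGraph.Walk.start_mem_support]⟩
  obtain ⟨x, hx, hmax⟩ := Finset.exists_max_image _ (fun y => S.T.dist S.root y) hne
  simp only [Finset.mem_inter, List.mem_toFinset] at hx hmax
  exact ⟨x, ⟨hx.1, hx.2⟩, fun y h1 h2 => hmax y ⟨h1, h2⟩⟩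

/-- `u ∧ w`: the vertex farthest from the root lying on both tree geodesics from the
root to `u` and from the root to `w`. -/
noncomputable def wedge (u w : V) : V := (S.exists_wedge u w).choose

/-- The order on vertices: `u ≤ w` iff `u ∧ w = u`, or `u ∧ w ≠ u` and
`g(u ∧ w, u) < g(u ∧ w, w)`. -/
def vle (u w : V) : Prop :=
  S.wedge u w = u ∨ (S.wedge u w ≠ u ∧ S.gfun (S.wedge u w) u < S.gfun (S.wedge u w) w)

/-- The associated strict order on vertices. -/
def vlt (u w : V) : Prop := S.vle u w ∧ u ≠ w

/-- `ι(e)`: the larger endpoint of the edge `e` in the vertex order. -/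
noncomputable def iota (e : Sym2 V) : V :=
  if S.vle (Quot.out e).1 (Quot.out e).2 then (Quot.out e).2 else (Quot.out e).1

/-- `τ(e)`: the smaller endpoint of the edge `e` in the vertex order. -/
noncomputable def tau (e : Sym2 V) : V :=
  if S.vle (Quot.out e).1 (Quot.out e).2 then (Quot.out e).1 else (Quot.out e).2

/-- `e(v)`: the edge of `T` incident to `v` lying on the tree geodesic from `v` to the root. -/
noncomputable def eV (v : V) : Sym2 V := s(v, (S.geod v S.root).getVert 1)

/-- A cell of `UD^n Γ`: an `n`-element set whose elements are vertices (encoded as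
diagonal elements of `Sym2 V`) and closed edges of `G`, no two distinct elements of which
share a vertex. -/
def IsCell (n : ℕ) (c : Finset (Sym2 V)) : Prop :=
  c.card = n ∧ (∀ s ∈ c, s.IsDiag ∨ s ∈ S.G.edgeSet) ∧
    ∀ s ∈ c, ∀ t ∈ c, s ≠ t → ∀ x : V, x ∈ s → x ∉ t

/-- The dimension of a cell: the number of edges it contains. -/
noncomputable def dim (c : Finset (Sym2 V)) : ℕ := (c.filter (fun s => ¬ s.IsDiag)).card

/-- A vertex `v` is blocked in `c` if `v` is the root, or `e(v)` shares a vertex with some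
element of `c` other than `v`. -/
def Blocked (c : Finset (Sym2 V)) (v : V) : Prop :=
  v = S.root ∨ ∃ s ∈ c, s ≠ Sym2.diag v ∧ ∃ x : V, x ∈ S.eV v ∧ x ∈ s

/-- A vertex `v` is unblocked in `c` if it belongs to `c` and is not blocked. -/
def Unblocked (c : Finset (Sym2 V)) (v : V) : Prop := Sym2.diag v ∈ c ∧ ¬ S.Blocked c v

/-- The elementary reduction of `c` from the vertex `v`: replace `v` by the edge `e(v)`. -/
noncomputable def redFrom (c : Finset (Sym2 V)) (v : V) : Finset (Sym2 V) :=
  insert (S.eV v) (c.erase (Sym2.diag v))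

/-- `c'` is the principal elementary reduction of `c`: it is the elementary reduction of `c`
from the smallest unblocked vertex of `c`. -/
def PrincipalRedOf (c c' : Finset (Sym2 V)) : Prop :=
  ∃ v : V, S.Unblocked c v ∧ (∀ u : V, S.Unblocked c u → S.vle v u) ∧ c' = S.redFrom c v

/-- Auxiliary definition of redundancy, by induction on the dimension: a cell of
dimension `i` is redundant iff it has an unblocked vertex and it is not the principal
elementary reduction of a redundant cell of dimension `i - 1`. -/
def RedundantAux (n : ℕ) : ℕ → Finset (Sym2 V) → Prop
  | 0, c => ∃ v, S.Unblocked c v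
  | (i + 1), c => (∃ v, S.Unblocked c v) ∧
      ¬ ∃ c₀, S.IsCell n c₀ ∧ dim c₀ = i ∧ RedundantAux n i c₀ ∧ S.PrincipalRedOf c₀ c

/-- A cell is redundant if the discrete vector field `W` is defined on it. -/
def Redundant (n : ℕ) (c : Finset (Sym2 V)) : Prop := S.RedundantAux n (dim c) c

/-- A cell is collapsible if it lies in the image of `W`. -/
def Collapsible (n : ℕ) (c : Finset (Sym2 V)) : Prop :=
  ∃ c₀, S.IsCell n c₀ ∧ S.Redundant n c₀ ∧ S.PrincipalRedOf c₀ c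

/-- A cell is critical if it is neither redundant nor collapsible. -/
def Critical (n : ℕ) (c : Finset (Sym2 V)) : Prop :=
  ¬ S.Redundant n c ∧ ¬ S.Collapsible n c

/-- An edge `e` of the cell `c` is order-respecting in `c` if `e` lies in `T` and every
vertex `v ∈ c` such that `e(v)` and `e` share the vertex `τ(e)` satisfies `v > ι(e)`. -/
def OrderResp (c : Finset (Sym2 V)) (e : Sym2 V) : Prop :=
  e ∈ c ∧ e ∈ S.T.edgeSet ∧
    ∀ v : V, v ≠ S.root → Sym2.diag v ∈ c → S.tau e ∈ S.eV v → S.vlt (S.iota e) v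

/-- `e` is the minimal order-respecting edge of `c`. -/
def MinOrderResp (c : Finset (Sym2 V)) (e : Sym2 V) : Prop :=
  S.OrderResp c e ∧ ∀ e' : Sym2 V, S.OrderResp c e' → S.vle (S.iota e) (S.iota e')

/-- `c'` is a face of `c` obtained by replacing one edge of `c` by one of its endpoints. -/
def IsFace (c' c : Finset (Sym2 V)) : Prop :=
  ∃ (e : Sym2 V) (x : V), e ∈ c ∧ ¬ e.IsDiag ∧ x ∈ e ∧ c' = insert (Sym2.diag x) (c.erase e)

/-- `Γ` is sufficiently subdivided for `n`: every path between distinct vertices of degree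
`≠ 2` passes through at least `n - 1` edges, and every cycle has length at least `n + 1`. -/
def SuffSubdiv (n : ℕ) : Prop :=
  (∀ u v : V, u ≠ v → ncdeg S.G u ≠ 2 → ncdeg S.G v ≠ 2 →
    ∀ p : S.G.Walk u v, p.IsPath → n - 1 ≤ p.length) ∧
  (∀ v : V, ∀ p : S.G.Walk v v, p.IsCycle → n + 1 ≤ p.length)

end Setup


namespace Setup

variable {V : Type} [Fintype V] [DecidableEq V] (S : Setup V)

/-! ### Basic lemmas about tree geodesics -/

lemma geod_isPath (u w : V) : (S.geod u w).IsPath :=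
  (S.T_tree.existsUnique_path u w).choose_spec.1

lemma geod_unique {u w : V} (p : S.T.Walk u w) (hp : p.IsPath) : p = S.geod u w :=
  ((S.T_tree.existsUnique_path u w).choose_spec.2 p hp).trans rfl

lemma path_length_eq_dist {u w : V} (p : S.T.Walk u w) (hp : p.IsPath) :
    p.length = S.T.dist u w := by
  refine le_antisymm ?_ (SimpleGraph.dist_le p)
  obtain ⟨q, hq⟩ := (S.T_tree.isConnected.preconnected u w).exists_walk_length_eq_dist
  have : p = q.bypass := by
    rw [S.geod_unique p hp, S.geod_unique q.bypass q.bypass_isPath]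
  calc p.length = q.bypass.length := by rw [this]
    _ ≤ q.length := q.length_bypass_le
    _ = S.T.dist u w := hq

lemma geod_length (u w : V) : (S.geod u w).length = S.T.dist u w :=
  S.path_length_eq_dist _ (S.geod_isPath u w)

lemma geod_self (u : V) : S.geod u u = SimpleGraph.Walk.nil :=
  (S.geod_unique SimpleGraph.Walk.nil SimpleGraph.Walk.IsPath.nil).symm

lemma geod_reverse (u w : V) : (S.geod u w).reverse = S.geod w u :=
  S.geod_unique _ (S.geod_isPath u w).reverse

lemma takeUntil_geod {u w x : V} (h : x ∈ (S.geod u w).support) :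
    (S.geod u w).takeUntil x h = S.geod u x :=
  S.geod_unique _ ((S.geod_isPath u w).takeUntil h)

lemma dropUntil_geod {u w x : V} (h : x ∈ (S.geod u w).support) :
    (S.geod u w).dropUntil x h = S.geod x w :=
  S.geod_unique _ ((S.geod_isPath u w).dropUntil h)

lemma geod_append {u w x : V} (h : x ∈ (S.geod u w).support) :
    (S.geod u x).append (S.geod x w) = S.geod u w := by
  rw [← S.takeUntil_geod h, ← S.dropUntil_geod h]
  exact (S.geod u w).take_spec h

lemma dist_add_of_mem {u w x : V} (h : x ∈ (S.geod u w).support) :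
    S.T.dist u x + S.T.dist x w = S.T.dist u w := by
  have := congrArg SimpleGraph.Walk.length (S.geod_append h)
  rwa [SimpleGraph.Walk.length_append, S.geod_length, S.geod_length, S.geod_length] at this

lemma dist_eq_zero_iff {u w : V} : S.T.dist u w = 0 ↔ u = w :=
  S.T_tree.isConnected.dist_eq_zero_iff

lemma eq_of_dist_eq {u w x y : V} (hx : x ∈ (S.geod u w).support)
    (hy : y ∈ (S.geod u w).support) (hd : S.T.dist u x = S.T.dist u y) : x = y := by
  rw [← S.geod_append hx, SimpleGraph.Walk.mem_support_append_iff] at hy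
  rcases hy with hy | hy
  · have h1 := S.dist_add_of_mem hy
    have h2 : S.T.dist u y + S.T.dist y x = S.T.dist u x := h1
    have : S.T.dist y x = 0 := by omega
    exact (S.dist_eq_zero_iff.mp this).symm
  · have h2 : S.T.dist x y + S.T.dist y w = S.T.dist x w := S.dist_add_of_mem hy
    have h3 : S.T.dist u x + S.T.dist x w = S.T.dist u w := S.dist_add_of_mem hx
    have h4 : S.T.dist u y + S.T.dist y w = S.T.dist u w := by
      have hy' : y ∈ (S.geod u w).support := by
        rw [← S.geod_append hx, SimpleGraph.Walk.mem_support_append_iff]; exact Or.inr hy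
      exact S.dist_add_of_mem hy'
    have : S.T.dist x y = 0 := by omega
    exact S.dist_eq_zero_iff.mp this

lemma mem_geod_mono {u w x y : V} (hx : x ∈ (S.geod u w).support)
    (hy : y ∈ (S.geod u w).support) (hd : S.T.dist u x ≤ S.T.dist u y) :
    x ∈ (S.geod u y).support := by
  rw [← S.geod_append hy, SimpleGraph.Walk.mem_support_append_iff] at hx
  rcases hx with hx | hx
  · exact hx
  · have h1 := S.dist_add_of_mem hx
    have h2 : y ∈ (S.geod u w).support := by
      rw [← S.geod_append hy, SimpleGraph.Walk.mem_support_append_iff]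
      exact Or.inl (SimpleGraph.Walk.end_mem_support _)
    have h3 := S.dist_add_of_mem h2
    have hx' : x ∈ (S.geod u w).support := by
      rw [← S.geod_append hy, SimpleGraph.Walk.mem_support_append_iff]; exact Or.inr hx
    have h4 := S.dist_add_of_mem hx'
    have : S.T.dist y x = 0 := by omega
    have := S.dist_eq_zero_iff.mp this
    subst this
    exact SimpleGraph.Walk.end_mem_support _

end Setup


namespace Setup

variable {V : Type} [Fintype V] [DecidableEq V] (S : Setup V)

/-! ### Wedge lemmas -/

lemma wedge_mem_left (u w : V) : S.wedge u w ∈ (S.geod S.root u).support :=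
  (S.exists_wedge u w).choose_spec.1.1

lemma wedge_mem_right (u w : V) : S.wedge u w ∈ (S.geod S.root w).support :=
  (S.exists_wedge u w).choose_spec.1.2

lemma wedge_max {u w : V} {y : V} (h1 : y ∈ (S.geod S.root u).support)
    (h2 : y ∈ (S.geod S.root w).support) :
    S.T.dist S.root y ≤ S.T.dist S.root (S.wedge u w) :=
  (S.exists_wedge u w).choose_spec.2 y h1 h2

lemma wedge_eq_of {u w m : V} (h1 : m ∈ (S.geod S.root u).support)
    (h2 : m ∈ (S.geod S.root w).support)
    (hmax : ∀ y : V, y ∈ (S.geod S.root u).support → y ∈ (S.geod S.root w).support →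
      S.T.dist S.root y ≤ S.T.dist S.root m) : S.wedge u w = m := by
  have ha := S.wedge_max h1 h2
  have hb := hmax _ (S.wedge_mem_left u w) (S.wedge_mem_right u w)
  exact S.eq_of_dist_eq (S.wedge_mem_left u w) h1 (le_antisymm hb ha)

lemma wedge_comm (u w : V) : S.wedge u w = S.wedge w u :=
  S.wedge_eq_of (S.wedge_mem_right w u) (S.wedge_mem_left w u)
    (fun y h1 h2 => S.wedge_max h2 h1)

lemma wedge_self (u : V) : S.wedge u u = u :=
  S.wedge_eq_of (SimpleGraph.Walk.end_mem_support _) (SimpleGraph.Walk.end_mem_support _)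
    (fun y h1 _ => by
      have := S.dist_add_of_mem h1
      omega)

lemma wedge_of_mem {x w : V} (h : x ∈ (S.geod S.root w).support) : S.wedge x w = x :=
  S.wedge_eq_of (SimpleGraph.Walk.end_mem_support _) h
    (fun y h1 _ => by
      have := S.dist_add_of_mem h1
      omega)

lemma mem_of_mem_geod_root {x y w : V} (hx : x ∈ (S.geod S.root w).support)
    (hy : y ∈ (S.geod x w).support) : y ∈ (S.geod S.root w).support := by
  rw [← S.geod_append hx, SimpleGraph.Walk.mem_support_append_iff]
  exact Or.inr hy

lemma mem_trans {x y w : V} (hx : x ∈ (S.geod S.root y).support)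
    (hy : y ∈ (S.geod S.root w).support) : x ∈ (S.geod S.root w).support := by
  rw [← S.geod_append hy, SimpleGraph.Walk.mem_support_append_iff]
  exact Or.inl hx

lemma mem_wedge {u w y : V} (h1 : y ∈ (S.geod S.root u).support)
    (h2 : y ∈ (S.geod S.root w).support) :
    y ∈ (S.geod S.root (S.wedge u w)).support :=
  S.mem_geod_mono h1 (S.wedge_mem_left u w) (S.wedge_max h1 h2)

/-! ### First steps of geodesics -/

/-- The first vertex after `u` on the tree geodesic from `u` to `w`. -/
noncomputable def firstStep (u w : V) : V := (S.geod u w).getVert 1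

lemma gfun_eq {u w : V} (h : u ≠ w) : S.gfun u w = S.label u (S.firstStep u w) := by
  rw [gfun, if_neg h]; rfl

lemma gfun_self (u : V) : S.gfun u u = 0 := by rw [gfun, if_pos rfl]

lemma adj_firstStep {u w : V} (h : u ≠ w) : S.T.Adj u (S.firstStep u w) := by
  have hl : 0 < (S.geod u w).length := by
    rw [S.geod_length]
    have : S.T.dist u w ≠ 0 := fun hc => h (S.dist_eq_zero_iff.mp hc)
    omega
  have := (S.geod u w).adj_getVert_succ hl
  rwa [SimpleGraph.Walk.getVert_zero] at this

lemma firstStep_mem {u w : V} (h : u ≠ w) : S.firstStep u w ∈ (S.geod u w).support := by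
  rw [SimpleGraph.Walk.mem_support_iff_exists_getVert]
  refine ⟨1, rfl, ?_⟩
  rw [S.geod_length]
  have : S.T.dist u w ≠ 0 := fun hc => h (S.dist_eq_zero_iff.mp hc)
  omega

lemma takeUntil_cons' {G : SimpleGraph V} {u b w x : V} (hadj : G.Adj u b) (q : G.Walk b w)
    (h : x ∈ (SimpleGraph.Walk.cons hadj q).support) (hux : u ≠ x) (hxq : x ∈ q.support) :
    (SimpleGraph.Walk.cons hadj q).takeUntil x h =
      SimpleGraph.Walk.cons hadj (q.takeUntil x hxq) := by
  rw [SimpleGraph.Walk.takeUntil]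
  simp [hux]

lemma getVert_one_takeUntil' {G : SimpleGraph V} {u w x : V} (p : G.Walk u w)
    (h : x ∈ p.support) (hux : u ≠ x) : (p.takeUntil x h).getVert 1 = p.getVert 1 := by
  cases p with
  | nil =>
    rw [SimpleGraph.Walk.mem_support_nil_iff] at h
    exact absurd h.symm hux
  | cons hadj q =>
    have hxq : x ∈ q.support := by
      cases h with
      | head => exact absurd rfl hux
      | tail _ h => exact h
    rw [takeUntil_cons' hadj q _ hux hxq]
    simp [SimpleGraph.Walk.getVert_cons_succ, SimpleGraph.Walk.getVert_zero]

lemma firstStep_eq_of_mem {u x w : V} (hux : u ≠ x) (hx : x ∈ (S.geod u w).support) :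
    S.firstStep u x = S.firstStep u w := by
  have h1 : (S.geod u x) = (S.geod u w).takeUntil x hx := (S.takeUntil_geod hx).symm
  unfold firstStep
  rw [h1, getVert_one_takeUntil' _ _ hux]

end Setup


namespace Setup

variable {V : Type} [Fintype V] [DecidableEq V] (S : Setup V)

/-! ### The order on vertices -/

lemma label_injOn (m : V) : Set.InjOn (S.label m) (S.T.neighborSet m) := by
  by_cases hm : m = S.root
  · subst hm
    intro x hx y hy _
    have h1 := S.root_deg
    rw [ncdeg, Set.ncard_eq_one] at h1
    obtain ⟨a, ha⟩ := h1
    rw [ha] at hx hy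
    rw [Set.mem_singleton_iff.mp hx, Set.mem_singleton_iff.mp hy]
  · exact (S.label_bij m hm).injOn

lemma firstStep_inj {m u w : V} (hmu : m ≠ u) (hmw : m ≠ w)
    (h : S.gfun m u = S.gfun m w) : S.firstStep m u = S.firstStep m w := by
  rw [S.gfun_eq hmu, S.gfun_eq hmw] at h
  exact S.label_injOn m ((S.adj_firstStep hmu)) ((S.adj_firstStep hmw)) h

lemma dist_firstStep {m u : V} (hm : m ∈ (S.geod S.root u).support) (hmu : m ≠ u) :
    S.firstStep m u ∈ (S.geod S.root u).support ∧
      S.T.dist S.root (S.firstStep m u) = S.T.dist S.root m + 1 := by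
  have hx1 : S.firstStep m u ∈ (S.geod m u).support := S.firstStep_mem hmu
  have hx2 : S.firstStep m u ∈ (S.geod S.root u).support := S.mem_of_mem_geod_root hm hx1
  have hd1 : S.T.dist m (S.firstStep m u) = 1 :=
    SimpleGraph.dist_eq_one_iff_adj.mpr (S.adj_firstStep hmu)
  have hd2 := S.dist_add_of_mem hx1
  have hd3 := S.dist_add_of_mem hm
  have hd4 := S.dist_add_of_mem hx2
  exact ⟨hx2, by omega⟩

lemma gfun_ne_of_wedge {u w : V} (hmu : S.wedge u w ≠ u) (hmw : S.wedge u w ≠ w) :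
    S.gfun (S.wedge u w) u ≠ S.gfun (S.wedge u w) w := by
  intro h
  set m := S.wedge u w with hm
  have hx := S.firstStep_inj hmu hmw h
  obtain ⟨hxu, hdu⟩ := S.dist_firstStep (S.wedge_mem_left u w) hmu
  obtain ⟨hxw, _⟩ := S.dist_firstStep (S.wedge_mem_right u w) hmw
  rw [hx] at hxu hdu
  have := S.wedge_max hxu hxw
  omega

lemma vle_refl (u : V) : S.vle u u := Or.inl (S.wedge_self u)

lemma vle_of_mem {x w : V} (h : x ∈ (S.geod S.root w).support) : S.vle x w :=
  Or.inl (S.wedge_of_mem h)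

lemma not_vle_of_mem {x w : V} (h : x ∈ (S.geod S.root w).support) (hne : x ≠ w) :
    ¬ S.vle w x := by
  have hao : S.wedge w x = x := (S.wedge_comm w x).trans (S.wedge_of_mem h)
  rintro (h1 | ⟨h1, h2⟩)
  · exact hne (hao.symm.trans h1)
  · rw [hao, S.gfun_self] at h2
    omega

lemma vle_total (u w : V) : S.vle u w ∨ S.vle w u := by
  by_cases h1 : S.wedge u w = u
  · exact Or.inl (Or.inl h1)
  by_cases h2 : S.wedge u w = w
  · exact Or.inr (Or.inl ((S.wedge_comm w u).trans h2))
  have := S.gfun_ne_of_wedge h1 h2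
  rcases Nat.lt_or_ge (S.gfun (S.wedge u w) u) (S.gfun (S.wedge u w) w) with h | h
  · exact Or.inl (Or.inr ⟨h1, h⟩)
  · refine Or.inr (Or.inr ⟨?_, ?_⟩)
    · rw [← S.wedge_comm u w]; exact h2
    · rw [← S.wedge_comm u w]; omega

lemma vle_antisymm {u w : V} (h1 : S.vle u w) (h2 : S.vle w u) : u = w := by
  rcases h1 with h1 | ⟨h1, h1'⟩ <;> rcases h2 with h2 | ⟨h2, h2'⟩
  · rw [S.wedge_comm u w, h2] at h1; exact h1.symm
  · rw [← S.wedge_comm u w, h1, S.gfun_self] at h2'; omega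
  · rw [S.wedge_comm u w, h2, S.gfun_self] at h1'; omega
  · rw [← S.wedge_comm u w] at h2'; omega

end Setup


namespace Setup

variable {V : Type} [Fintype V] [DecidableEq V] (S : Setup V)

/-! ### Transitivity of the order -/

lemma dist_le_of_mem {x y : V} (h : x ∈ (S.geod S.root y).support) :
    S.T.dist S.root x ≤ S.T.dist S.root y := by
  have := S.dist_add_of_mem h; omega

lemma eq_of_mem_of_dist {x y : V} (h : x ∈ (S.geod S.root y).support)
    (hd : S.T.dist S.root x = S.T.dist S.root y) : x = y :=
  S.eq_of_dist_eq h (SimpleGraph.Walk.end_mem_support _) hd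

lemma mem_comparable {x y u : V} (hx : x ∈ (S.geod S.root u).support)
    (hy : y ∈ (S.geod S.root u).support) :
    x ∈ (S.geod S.root y).support ∨ y ∈ (S.geod S.root x).support := by
  rcases Nat.le_or_le (S.T.dist S.root x) (S.T.dist S.root y) with h | h
  · exact Or.inl (S.mem_geod_mono hx hy h)
  · exact Or.inr (S.mem_geod_mono hy hx h)

lemma mem_geod_seg {m x u : V} (hm : m ∈ (S.geod S.root u).support)
    (hx : x ∈ (S.geod S.root u).support)
    (hd : S.T.dist S.root m ≤ S.T.dist S.root x) : x ∈ (S.geod m u).support := by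
  have := S.geod_append hm
  rw [← this, SimpleGraph.Walk.mem_support_append_iff] at hx
  rcases hx with hx | hx
  · have h1 := S.dist_le_of_mem hx
    have h2 : x = m := S.eq_of_mem_of_dist hx (le_antisymm h1 hd)
    subst h2
    exact SimpleGraph.Walk.start_mem_support _
  · exact hx

lemma gfun_eq_of_mem {m x u : V} (hmx : m ≠ x) (hx : x ∈ (S.geod m u).support) :
    S.gfun m x = S.gfun m u := by
  have hmu : m ≠ u := by
    rintro rfl
    rw [S.geod_self] at hx
    simp only [SimpleGraph.Walk.support_nil, List.mem_singleton] at hx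
    exact hmx hx.symm
  rw [S.gfun_eq hmx, S.gfun_eq hmu, S.firstStep_eq_of_mem hmx hx]

lemma vle_trans {u w z : V} (h1 : S.vle u w) (h2 : S.vle w z) : S.vle u z := by
  have m1u : S.wedge u w ∈ (S.geod S.root u).support := S.wedge_mem_left u w
  have m1w : S.wedge u w ∈ (S.geod S.root w).support := S.wedge_mem_right u w
  have m2w : S.wedge w z ∈ (S.geod S.root w).support := S.wedge_mem_left w z
  have m2z : S.wedge w z ∈ (S.geod S.root z).support := S.wedge_mem_right w z
  obtain ⟨m1, hm1⟩ : ∃ x, S.wedge u w = x := ⟨_, rfl⟩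
  obtain ⟨m2, hm2⟩ : ∃ x, S.wedge w z = x := ⟨_, rfl⟩
  unfold vle at h1 h2
  rw [hm1] at h1 m1u m1w
  rw [hm2] at h2 m2w m2z
  rcases h1 with h1 | ⟨h1ne, h1lt⟩
  · -- u is an ancestor of w
    have hu_w : u ∈ (S.geod S.root w).support := h1 ▸ m1w
    rcases h2 with h2 | ⟨h2ne, h2lt⟩
    · -- w ancestor of z
      have hw_z : w ∈ (S.geod S.root z).support := h2 ▸ m2z
      exact S.vle_of_mem (S.mem_trans hu_w hw_z)
    · rcases S.mem_comparable hu_w m2w with hc | hc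
      · -- u ancestor of m2, hence of z
        exact S.vle_of_mem (S.mem_trans hc m2z)
      · -- m2 is an ancestor of u
        by_cases hm2u : m2 = u
        · exact S.vle_of_mem (hm2u ▸ m2z)
        · have hseg : u ∈ (S.geod m2 w).support :=
            S.mem_geod_seg m2w hu_w (S.dist_le_of_mem hc)
          have hg : S.gfun m2 u = S.gfun m2 w := S.gfun_eq_of_mem hm2u hseg
          have hwz : S.wedge u z = m2 := by
            refine S.wedge_eq_of hc m2z (fun y hyu hyz => ?_)
            exact hm2 ▸ S.wedge_max (S.mem_trans hyu hu_w) hyz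
          exact Or.inr ⟨by rw [hwz]; exact hm2u, by rw [hwz, hg]; exact h2lt⟩
  · -- m1 ≠ u, gfun m1 u < gfun m1 w
    have hm1w : m1 ≠ w := by
      rintro rfl
      rw [S.gfun_self] at h1lt
      omega
    rcases h2 with h2 | ⟨h2ne, h2lt⟩
    · -- w ancestor of z
      have hw_z : w ∈ (S.geod S.root z).support := h2 ▸ m2z
      have hm1z : m1 ∈ (S.geod S.root z).support := S.mem_trans m1w hw_z
      have hseg : w ∈ (S.geod m1 z).support :=
        S.mem_geod_seg hm1z hw_z (S.dist_le_of_mem m1w)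
      have hg : S.gfun m1 w = S.gfun m1 z := S.gfun_eq_of_mem hm1w hseg
      have hwz : S.wedge u z = m1 := by
        refine S.wedge_eq_of m1u hm1z (fun y hyu hyz => ?_)
        rcases S.mem_comparable hyz hw_z with hc | hc
        · exact hm1 ▸ S.wedge_max hyu hc
        · -- w ancestor of y hence of u : contradiction with m1 ≠ w
          have hwu : w ∈ (S.geod S.root u).support := S.mem_trans hc hyu
          have h3 := hm1 ▸ S.wedge_max hwu (SimpleGraph.Walk.end_mem_support _)
          have h4 := S.dist_le_of_mem m1w
          exact absurd (S.eq_of_dist_eq m1w (SimpleGraph.Walk.end_mem_support _)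
            (le_antisymm h4 h3)) hm1w
      exact Or.inr ⟨hwz ▸ h1ne, by rw [hwz, ← hg]; exact h1lt⟩
    · -- both strict
      have hm2z : m2 ≠ z := by
        rintro rfl
        rw [S.gfun_self] at h2lt
        omega
      rcases S.mem_comparable m1w m2w with hc | hc
      · -- m1 ancestor of m2
        by_cases heq : m1 = m2
        · -- equal wedges
          subst heq
          have hwz : S.wedge u z = m1 := by
            refine S.wedge_eq_of m1u m2z (fun y hyu hyz => ?_)
            by_contra hgt
            push_neg at hgt
            have hmy : m1 ∈ (S.geod S.root y).support := by
              rcases S.mem_comparable hyu m1u with hc2 | hc2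
              · have := S.dist_le_of_mem hc2; omega
              · exact hc2
            have hm1y : m1 ≠ y := by
              rintro rfl; omega
            have hg1 : S.gfun m1 y = S.gfun m1 u :=
              S.gfun_eq_of_mem hm1y (S.mem_geod_seg m1u hyu (by omega))
            have hg2 : S.gfun m1 y = S.gfun m1 z :=
              S.gfun_eq_of_mem hm1y (S.mem_geod_seg m2z hyz (by omega))
            omega
          by_cases hm1u' : m1 = u
          · exact Or.inl (hwz.trans hm1u')
          · exact Or.inr ⟨hwz ▸ hm1u', by rw [hwz]; omega⟩
        · -- m1 strictly below m2
          have hd12 : S.T.dist S.root m1 ≤ S.T.dist S.root m2 := S.dist_le_of_mem hc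
          have hm1z : m1 ∈ (S.geod S.root z).support := S.mem_trans hc m2z
          have hg1 : S.gfun m1 m2 = S.gfun m1 z :=
            S.gfun_eq_of_mem heq (S.mem_geod_seg hm1z m2z hd12)
          have hg2 : S.gfun m1 m2 = S.gfun m1 w :=
            S.gfun_eq_of_mem heq (S.mem_geod_seg m1w m2w hd12)
          have hwz : S.wedge u z = m1 := by
            refine S.wedge_eq_of m1u hm1z (fun y hyu hyz => ?_)
            rcases S.mem_comparable hyz m2z with hc2 | hc2
            · exact hm1 ▸ S.wedge_max hyu (S.mem_trans hc2 m2w)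
            · -- m2 ancestor of y hence of u : contradiction
              have hm2u : m2 ∈ (S.geod S.root u).support := S.mem_trans hc2 hyu
              have h3 := hm1 ▸ S.wedge_max hm2u m2w
              have : m1 = m2 := S.eq_of_dist_eq hc (SimpleGraph.Walk.end_mem_support _)
                (le_antisymm hd12 h3)
              exact absurd this heq
          exact Or.inr ⟨hwz ▸ h1ne, by rw [hwz, ← hg1, hg2]; exact h1lt⟩
      · -- m2 ancestor of m1 (possibly equal, symmetric)
        by_cases heq : m2 = m1
        · subst heq
          -- same as the equal case above
          have hwz : S.wedge u z = m2 := by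
            refine S.wedge_eq_of m1u m2z (fun y hyu hyz => ?_)
            by_contra hgt
            push_neg at hgt
            have hm1y : m2 ≠ y := by
              rintro rfl
              have := S.dist_le_of_mem (S.mem_wedge hyu (S.mem_trans hc hyu))
              omega
            have hg1 : S.gfun m2 y = S.gfun m2 u :=
              S.gfun_eq_of_mem hm1y (S.mem_geod_seg m1u hyu (by omega))
            have hg2 : S.gfun m2 y = S.gfun m2 z :=
              S.gfun_eq_of_mem hm1y (S.mem_geod_seg m2z hyz (by omega))
            omega
          by_cases hm1u' : m2 = u
          · exact Or.inl (hwz.trans hm1u')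
          · exact Or.inr ⟨hwz ▸ hm1u', by rw [hwz]; omega⟩
        · have hd21 : S.T.dist S.root m2 ≤ S.T.dist S.root m1 := S.dist_le_of_mem hc
          have hm2u : m2 ∈ (S.geod S.root u).support := S.mem_trans hc m1u
          have hg1 : S.gfun m2 m1 = S.gfun m2 u :=
            S.gfun_eq_of_mem heq (S.mem_geod_seg hm2u m1u hd21)
          have hg2 : S.gfun m2 m1 = S.gfun m2 w :=
            S.gfun_eq_of_mem heq (S.mem_geod_seg m2w m1w hd21)
          have hwz : S.wedge u z = m2 := by
            refine S.wedge_eq_of hm2u m2z (fun y hyu hyz => ?_)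
            rcases S.mem_comparable hyu m1u with hc2 | hc2
            · exact hm2 ▸ S.wedge_max (S.mem_trans hc2 m1w) hyz
            · -- m1 ancestor of y hence of z : contradiction
              have hm1z : m1 ∈ (S.geod S.root z).support := S.mem_trans hc2 hyz
              have h3 := hm2 ▸ S.wedge_max m1w hm1z
              have : m2 = m1 := S.eq_of_dist_eq hc (SimpleGraph.Walk.end_mem_support _)
                (le_antisymm hd21 h3)
              exact absurd this heq
          by_cases hm2u' : m2 = u
          · exact Or.inl (hwz.trans hm2u')
          · exact Or.inr ⟨hwz ▸ hm2u', by rw [hwz, hg1.symm.trans hg2]; exact h2lt⟩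

end Setup


namespace Setup

variable {V : Type} [Fintype V] [DecidableEq V] (S : Setup V)

/-! ### Minima, parents, and orientation of tree edges -/

lemma exists_vle_min {α : Type} (s : Finset α) (f : α → V) (hs : s.Nonempty) :
    ∃ a ∈ s, ∀ b ∈ s, S.vle (f a) (f b) := by
  classical
  induction s using Finset.induction_on with
  | empty => exact absurd hs (by simp)
  | insert x s₀ hx ih =>
    rcases s₀.eq_empty_or_nonempty with h0 | h0
    · subst h0
      exact ⟨x, Finset.mem_insert_self _ _, fun b hb => by
        rw [Finset.mem_insert] at hb
        rcases hb with rfl | hb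
        · exact S.vle_refl _
        · exact absurd hb (by simp)⟩
    · obtain ⟨a, ha, hmin⟩ := ih h0
      rcases S.vle_total (f x) (f a) with h | h
      · refine ⟨x, Finset.mem_insert_self _ _, fun b hb => ?_⟩
        rw [Finset.mem_insert] at hb
        rcases hb with rfl | hb
        · exact S.vle_refl _
        · exact S.vle_trans h (hmin b hb)
      · refine ⟨a, Finset.mem_insert_of_mem ha, fun b hb => ?_⟩
        rw [Finset.mem_insert] at hb
        rcases hb with rfl | hb
        · exact h
        · exact hmin b hb

/-- The parent of a vertex: the next vertex on the tree geodesic towards the root. -/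
noncomputable def par (v : V) : V := (S.geod v S.root).getVert 1

lemma par_eq_firstStep (v : V) : S.par v = S.firstStep v S.root := rfl

lemma eV_eq (v : V) : S.eV v = s(v, S.par v) := rfl

lemma adj_par {v : V} (hv : v ≠ S.root) : S.T.Adj v (S.par v) := S.adj_firstStep hv

lemma par_ne {v : V} (hv : v ≠ S.root) : S.par v ≠ v := (S.adj_par hv).ne'

lemma par_mem {v : V} (hv : v ≠ S.root) : S.par v ∈ (S.geod S.root v).support := by
  have h1 : S.par v ∈ (S.geod v S.root).support := S.firstStep_mem hv
  rw [← S.geod_reverse S.root v, SimpleGraph.Walk.support_reverse, List.mem_reverse] at h1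
  exact h1

lemma dist_par {v : V} (hv : v ≠ S.root) :
    S.T.dist S.root (S.par v) + 1 = S.T.dist S.root v := by
  have h1 := S.dist_add_of_mem (S.par_mem hv)
  have h2 : S.T.dist (S.par v) v = 1 :=
    SimpleGraph.dist_eq_one_iff_adj.mpr (S.adj_par hv).symm
  omega

lemma mem_eV {x v : V} : x ∈ S.eV v ↔ x = v ∨ x = S.par v := by
  rw [S.eV_eq]; exact Sym2.mem_iff

lemma eV_not_isDiag {v : V} (hv : v ≠ S.root) : ¬ (S.eV v).IsDiag := by
  rw [S.eV_eq, Sym2.mk_isDiag_iff]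
  exact (S.adj_par hv).ne

lemma eV_mem_T {v : V} (hv : v ≠ S.root) : S.eV v ∈ S.T.edgeSet := by
  rw [S.eV_eq, SimpleGraph.mem_edgeSet]
  exact S.adj_par hv

lemma par_unique {a b : V} (hadj : S.T.Adj a b) (hb : b ∈ (S.geod S.root a).support) :
    a ≠ S.root ∧ b = S.par a := by
  have hba : b ≠ a := hadj.ne'
  have ha : a ≠ S.root := by
    rintro rfl
    rw [S.geod_self] at hb
    simp only [SimpleGraph.Walk.support_nil, List.mem_singleton] at hb
    exact hba hb
  refine ⟨ha, ?_⟩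
  have h1 := S.dist_add_of_mem hb
  have h2 : S.T.dist b a = 1 := SimpleGraph.dist_eq_one_iff_adj.mpr hadj.symm
  have h3 := S.dist_par ha
  exact S.eq_of_dist_eq hb (S.par_mem ha) (by omega)

lemma edge_orientation {e : Sym2 V} (he : e ∈ S.T.edgeSet) :
    ∃ a : V, a ≠ S.root ∧ e = s(a, S.par a) := by
  induction e using Sym2.ind with
  | _ a b =>
    rw [SimpleGraph.mem_edgeSet] at he
    by_cases hb : b ∈ (S.geod S.root a).support
    · obtain ⟨ha, hpar⟩ := S.par_unique he hb
      exact ⟨a, ha, by rw [hpar]⟩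
    · have hab : a ∈ (S.geod S.root b).support := by
        have hpath : ((S.geod S.root a).concat he).IsPath := by
          rw [SimpleGraph.Walk.isPath_def, SimpleGraph.Walk.support_concat,
            List.nodup_append]
          exact ⟨(S.geod_isPath S.root a).support_nodup, List.nodup_singleton _,
            by simpa using fun (x : V) (hx : x ∈ (S.geod S.root a).support) (hxb : x = b) => hb (hxb ▸ hx)⟩
        have := S.geod_unique _ hpath
        rw [← this, SimpleGraph.Walk.support_concat]
        exact List.mem_append_left _ (SimpleGraph.Walk.end_mem_support _)
      obtain ⟨hbr, hpar⟩ := S.par_unique he.symm hab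
      exact ⟨b, hbr, by rw [hpar, Sym2.eq_swap]⟩

lemma mk_out {α : Type} (e : Sym2 α) : s((Quot.out e).1, (Quot.out e).2) = e := by
  exact Quot.out_eq e

lemma iota_tau_eq {x y : V} (h1 : S.vle y x) (h2 : ¬ S.vle x y) :
    S.iota s(x, y) = x ∧ S.tau s(x, y) = y := by
  rcases Sym2.eq_iff.mp (mk_out s(x, y)) with ⟨ha, hb⟩ | ⟨ha, hb⟩
  · rw [iota, tau, ha, hb, if_neg h2, if_neg h2]
    exact ⟨rfl, rfl⟩
  · rw [iota, tau, ha, hb, if_pos h1, if_pos h1]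
    exact ⟨rfl, rfl⟩

lemma iota_par {a : V} (ha : a ≠ S.root) :
    S.iota s(a, S.par a) = a ∧ S.tau s(a, S.par a) = S.par a := by
  have h1 : S.vle (S.par a) a := S.vle_of_mem (S.par_mem ha)
  have h2 : ¬ S.vle a (S.par a) := S.not_vle_of_mem (S.par_mem ha) (S.par_ne ha)
  exact S.iota_tau_eq h1 h2

lemma iota_tau_edge {e : Sym2 V} (he : e ∈ S.T.edgeSet) :
    S.iota e ≠ S.root ∧ e = S.eV (S.iota e) ∧ S.tau e = S.par (S.iota e) ∧
      S.tau e ∈ e ∧ S.iota e ∈ e ∧ S.tau e ≠ S.iota e := by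
  obtain ⟨a, ha, rfl⟩ := S.edge_orientation he
  obtain ⟨hi, ht⟩ := S.iota_par ha
  rw [hi, ht]
  refine ⟨ha, by rw [S.eV_eq], rfl, ?_, ?_, S.par_ne ha⟩
  · rw [Sym2.mem_iff]; exact Or.inr rfl
  · rw [Sym2.mem_iff]; exact Or.inl rfl

lemma vlt_of_vle_ne {x y : V} (h : S.vle x y) (hne : x ≠ y) : S.vlt x y := ⟨h, hne⟩

end Setup


namespace Setup

variable {V : Type} [Fintype V] [DecidableEq V] (S : Setup V)

/-! ### Cells -/

lemma mem_diag_iff {x v : V} : x ∈ Sym2.diag v ↔ x = v := by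
  rw [Sym2.diag, Sym2.mem_iff, or_self]

lemma cell_disjoint {n : ℕ} {c : Finset (Sym2 V)} (hc : S.IsCell n c) {s t : Sym2 V}
    (hs : s ∈ c) (ht : t ∈ c) {x : V} (hxs : x ∈ s) (hxt : x ∈ t) : s = t := by
  by_contra h
  exact hc.2.2 s hs t ht h x hxs hxt

lemma redundant_or_collapsible {n : ℕ} {c : Finset (Sym2 V)} (hc : S.IsCell n c)
    (h : ∃ v, S.Unblocked c v) : S.Redundant n c ∨ S.Collapsible n c := by
  by_cases hr : S.Redundant n c
  · exact Or.inl hr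
  · rw [Redundant] at hr
    rcases hd : dim c with _ | i
    · rw [hd, RedundantAux] at hr
      exact absurd h hr
    · rw [hd, RedundantAux] at hr
      push_neg at hr
      obtain ⟨c₀, hcell₀, hdim₀, hred₀, hpr₀⟩ := hr h
      exact Or.inr ⟨c₀, hcell₀, by rw [Redundant, hdim₀]; exact hred₀, hpr₀⟩

end Setup


namespace Setup

variable {V : Type} [Fintype V] [DecidableEq V] (S : Setup V)

/-! ### The collapse construction -/

lemma edge_not_isDiag {e : Sym2 V} (he : e ∈ S.T.edgeSet) : ¬ e.IsDiag := by
  obtain ⟨a, ha, rfl⟩ := S.edge_orientation he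
  rw [Sym2.mk_isDiag_iff]
  exact (S.adj_par ha).ne

lemma unblocked_ne_root {c : Finset (Sym2 V)} {v : V} (h : S.Unblocked c v) : v ≠ S.root :=
  fun hv => h.2 (Or.inl hv)

lemma collapsible_of_min_orderResp {n : ℕ} {c : Finset (Sym2 V)} (hc : S.IsCell n c)
    (hall : ∀ v, ¬ S.Unblocked c v) {e : Sym2 V} (hor : S.OrderResp c e)
    (hmin : ∀ e', S.OrderResp c e' → S.vle (S.iota e) (S.iota e')) :
    S.Collapsible n c := by
  obtain ⟨hiroot, heV, htau, htaue, hiote, htne⟩ := S.iota_tau_edge hor.2.1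
  have hediag : ¬ e.IsDiag := S.edge_not_isDiag hor.2.1
  -- the cell c₀ obtained by replacing e with its endpoint ι(e)
  set c₀ : Finset (Sym2 V) := insert (Sym2.diag (S.iota e)) (c.erase e) with hc₀
  have f1 : Sym2.diag (S.iota e) ∉ c := by
    intro h
    have hde := S.cell_disjoint hc h hor.1 (mem_diag_iff.mpr rfl) hiote
    exact hediag (hde ▸ Sym2.diag_isDiag (S.iota e))
  have f1' : Sym2.diag (S.iota e) ∉ c.erase e := fun h => f1 (Finset.mem_of_mem_erase h)
  have f2 : e ∉ c₀ := by
    rw [hc₀, Finset.mem_insert]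
    rintro (h | h)
    · exact hediag (h.symm ▸ Sym2.diag_isDiag (S.iota e))
    · exact (Finset.ne_of_mem_erase h) rfl
  have fmem : ∀ s : Sym2 V, s ∈ c₀ ↔ s = Sym2.diag (S.iota e) ∨ (s ∈ c ∧ s ≠ e) := by
    intro s
    rw [hc₀, Finset.mem_insert, Finset.mem_erase]
    tauto
  have f4 : S.IsCell n c₀ := by
    refine ⟨?_, ?_, ?_⟩
    · rw [hc₀, Finset.card_insert_of_notMem f1', Finset.card_erase_of_mem hor.1, hc.1]
      have : 1 ≤ n := by
        rw [← hc.1]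
        exact Finset.card_pos.mpr ⟨e, hor.1⟩
      omega
    · intro s hs
      rcases (fmem s).mp hs with rfl | ⟨hs, _⟩
      · exact Or.inl (Sym2.diag_isDiag _)
      · exact hc.2.1 s hs
    · intro s hs t ht hst x hxs hxt
      rcases (fmem s).mp hs with rfl | ⟨hs1, hs2⟩ <;> rcases (fmem t).mp ht with rfl | ⟨ht1, ht2⟩
      · exact hst rfl
      · rw [mem_diag_iff] at hxs
        subst hxs
        exact ht2 (S.cell_disjoint hc ht1 hor.1 hxt hiote)
      · rw [mem_diag_iff] at hxt
        subst hxt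
        exact hs2 (S.cell_disjoint hc hs1 hor.1 hxs hiote)
      · exact hc.2.2 s hs1 t ht1 hst x hxs hxt
  have f5 : S.Unblocked c₀ (S.iota e) := by
    refine ⟨by rw [hc₀]; exact Finset.mem_insert_self _ _, ?_⟩
    rintro (h | ⟨s, hs, hsne, x, hx1, hx2⟩)
    · exact hiroot h
    · rcases (fmem s).mp hs with rfl | ⟨hs1, hs2⟩
      · exact hsne rfl
      · rw [S.mem_eV] at hx1
        rcases hx1 with rfl | hx1
        · exact hs2 (S.cell_disjoint hc hs1 hor.1 hx2 hiote)
        · subst hx1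
          exact hs2 (S.cell_disjoint hc hs1 hor.1 hx2 (htau ▸ htaue))
  have f6 : ∀ u, S.Unblocked c₀ u → S.vle (S.iota e) u := by
    intro u hu
    by_cases hua : u = S.iota e
    · subst hua; exact S.vle_refl _
    have huroot : u ≠ S.root := S.unblocked_ne_root hu
    have hudiag : Sym2.diag u ∈ c := by
      rcases (fmem _).mp hu.1 with h | ⟨h, _⟩
      · exact absurd (Sym2.diag_injective h) hua
      · exact h
    have hbl : S.Blocked c u := by
      by_contra h
      exact hall u ⟨hudiag, h⟩
    rcases hbl with h | ⟨s, hs, hsne, x, hx1, hx2⟩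
    · exact absurd h huroot
    by_cases hse : s = e
    · rw [hse] at hx2
      have hxe : x = S.iota e ∨ x = S.tau e := by
        have hx2' : x ∈ S.eV (S.iota e) := heV ▸ hx2
        rw [S.mem_eV] at hx2'
        rcases hx2' with h | h
        · exact Or.inl h
        · exact Or.inr (by rw [h, ← htau])
      rw [S.mem_eV] at hx1
      rcases hx1 with rfl | hx1
      · -- x = u lies on the edge e : impossible
        have hde := S.cell_disjoint hc hudiag hor.1 (mem_diag_iff.mpr rfl) hx2
        exact absurd (hde ▸ Sym2.diag_isDiag _) hediag
      rcases hxe with hxe | hxe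
      · -- par u = ι(e) : then ι(e) blocks u in c₀, contradiction
        exfalso
        refine hu.2 (Or.inr ⟨Sym2.diag (S.iota e), by rw [hc₀]; exact Finset.mem_insert_self _ _,
          fun h => hua (Sym2.diag_injective h.symm), x, ?_, ?_⟩)
        · rw [S.mem_eV]; exact Or.inr hx1
        · rw [mem_diag_iff]; exact hxe
      · -- par u = τ(e) : order-respecting property gives ι(e) < u
        have htpu : S.tau e = S.par u := by rw [← hxe]; exact hx1
        exact (hor.2.2 u huroot hudiag (by rw [S.mem_eV]; exact Or.inr htpu)).1
    · -- the blocking element s survives in c₀ : contradiction with u unblocked in c₀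
      exfalso
      exact hu.2 (Or.inr ⟨s, (fmem s).mpr (Or.inr ⟨hs, hse⟩), hsne, x, hx1, hx2⟩)
  have f7 : c = S.redFrom c₀ (S.iota e) := by
    rw [redFrom, hc₀, Finset.erase_insert f1', ← heV, Finset.insert_erase hor.1]
  have f8 : S.Redundant n c₀ := by
    rw [Redundant]
    rcases hd0 : dim c₀ with _ | i
    · show ∃ v, S.Unblocked c₀ v
      exact ⟨_, f5⟩
    · refine ⟨⟨_, f5⟩, ?_⟩
      rintro ⟨c₁, hcell₁, hdim₁, hred₁, v, hub, hmin₁, hc₀eq⟩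
      have hvroot : v ≠ S.root := S.unblocked_ne_root hub
      have hdv : Sym2.diag v ∈ c₁ := hub.1
      rw [redFrom] at hc₀eq
      have heVdiag : ¬ (S.eV v).IsDiag := S.eV_not_isDiag hvroot
      have g4a : S.eV v ∈ c₀ := by rw [hc₀eq]; exact Finset.mem_insert_self _ _
      have g4 : S.eV v ∈ c ∧ S.eV v ≠ e := by
        rcases (fmem _).mp g4a with h | h
        · exact absurd (h ▸ Sym2.diag_isDiag (S.iota e)) (h ▸ heVdiag)
        · exact h
      have gmem : ∀ s : Sym2 V, s ∈ c₀ ↔ s = S.eV v ∨ (s ∈ c₁ ∧ s ≠ Sym2.diag v) := by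
        intro s
        rw [hc₀eq, Finset.mem_insert, Finset.mem_erase]
        tauto
      have g0 : S.eV v ∉ c₁ := by
        intro h
        have hde := S.cell_disjoint hcell₁ h hdv (x := v) ((S.mem_eV).mpr (Or.inl rfl))
          (mem_diag_iff.mpr rfl)
        exact heVdiag (hde ▸ Sym2.diag_isDiag v)
      have g3 : ∀ s : Sym2 V, s ∈ c₁ ↔ s = Sym2.diag v ∨ (s ∈ c₀ ∧ s ≠ S.eV v) := by
        intro s
        constructor
        · intro h
          by_cases hsd : s = Sym2.diag v
          · exact Or.inl hsd
          · exact Or.inr ⟨(gmem s).mpr (Or.inr ⟨h, hsd⟩), fun hse => g0 (hse ▸ h)⟩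
        · rintro (rfl | ⟨h1, h2⟩)
          · exact hdv
          · rcases (gmem s).mp h1 with h | h
            · exact absurd h h2
            · exact h.1
      have g6 : Sym2.diag (S.iota e) ∈ c₁ ∧ S.iota e ≠ v := by
        have hm : Sym2.diag (S.iota e) ∈ c₀ := by rw [hc₀]; exact Finset.mem_insert_self _ _
        rcases (gmem _).mp hm with h | ⟨h1, h2⟩
        · exact absurd (h ▸ Sym2.diag_isDiag (S.iota e)) heVdiag
        · exact ⟨h1, fun hiv => h2 (by rw [hiv])⟩
      have g5 : v ≠ S.tau e := by
        intro hv
        exact g4.2 (S.cell_disjoint hc g4.1 hor.1 (x := v) ((S.mem_eV).mpr (Or.inl rfl))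
          (hv ▸ htaue))
      obtain ⟨hiv, htv⟩ := S.iota_par hvroot
      rw [← S.eV_eq] at hiv htv
      have g7 : S.OrderResp c₀ (S.eV v) := by
        refine ⟨g4a, S.eV_mem_T hvroot, ?_⟩
        intro u huroot hudiag0 htu
        rw [htv, S.mem_eV] at htu
        have hudiag1 : Sym2.diag u ∈ c₁ ∧ u ≠ v := by
          rcases (gmem _).mp hudiag0 with h | ⟨h1, h2⟩
          · exact absurd (h ▸ Sym2.diag_isDiag u) heVdiag
          · exact ⟨h1, fun huv => h2 (by rw [huv])⟩
        rcases htu with htu | htu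
        · exfalso
          refine hub.2 (Or.inr ⟨Sym2.diag u, hudiag1.1,
            fun h => hudiag1.2 (Sym2.diag_injective h), S.par v, ?_, ?_⟩)
          · rw [S.mem_eV]; exact Or.inr rfl
          · rw [mem_diag_iff]; exact htu
        · have huub : S.Unblocked c₁ u := by
            refine ⟨hudiag1.1, ?_⟩
            rintro (h | ⟨s, hs, hsne, x, hx1, hx2⟩)
            · exact huroot h
            rw [S.mem_eV] at hx1
            rcases hx1 with h | hx1
            · refine hsne (S.cell_disjoint hcell₁ hs hudiag1.1 hx2 ?_)
              rw [mem_diag_iff]; exact h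
            · refine hub.2 (Or.inr ⟨s, hs, ?_, x, ?_, hx2⟩)
              · intro hsd
                rw [hsd] at hx2
                rw [mem_diag_iff] at hx2
                exact (S.par_ne hvroot) (by rw [htu, ← hx1, hx2])
              · rw [S.mem_eV]; exact Or.inr (hx1.trans htu.symm)
          have hv_u := hmin₁ u huub
          refine ⟨by rw [hiv]; exact hv_u, by rw [hiv]; exact fun h => hudiag1.2 h.symm⟩
      have g8 : S.OrderResp c (S.eV v) := by
        refine ⟨g4.1, S.eV_mem_T hvroot, ?_⟩
        intro u huroot hudiag htu
        refine g7.2.2 u huroot ?_ htu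
        exact (fmem _).mpr (Or.inr ⟨hudiag, fun h => hediag (h ▸ Sym2.diag_isDiag u)⟩)
      have g9 : S.vle (S.iota e) v := by
        have := hmin _ g8
        rwa [hiv] at this
      have g10 : S.Unblocked c₁ (S.iota e) := by
        refine ⟨g6.1, ?_⟩
        rintro (h | ⟨s, hs, hsne, x, hx1, hx2⟩)
        · exact hiroot h
        rw [S.mem_eV] at hx1
        rcases hx1 with h | hx1
        · refine hsne (S.cell_disjoint hcell₁ hs g6.1 hx2 ?_)
          rw [mem_diag_iff]; exact h
        · have hxt : x = S.tau e := by rw [hx1, htau]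
          rcases (g3 s).mp hs with rfl | ⟨h1, h2⟩
          · rw [mem_diag_iff] at hx2
            exact g5 (by rw [← hx2, hxt])
          · rcases (fmem s).mp h1 with rfl | ⟨h3, h4⟩
            · exact hsne rfl
            · exact h4 (S.cell_disjoint hc h3 hor.1 (hxt ▸ hx2) htaue)
      have g11 : S.vle v (S.iota e) := hmin₁ _ g10
      exact g6.2 (S.vle_antisymm g9 g11)
  exact ⟨c₀, f4, f8, S.iota e, f5, f6, f7⟩

end Setup

/-- If `D` is the number of deleted edges, every critical cell of `UD^nΓ` has dimension at
most `⌊(n + D)/2⌋`. -/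
theorem stmt14 {V : Type} [Fintype V] [DecidableEq V] (S : Setup V) (n : ℕ) (hn : 1 ≤ n) (hsub : S.SuffSubdiv n) :
    ∀ c : Finset (Sym2 V), S.IsCell n c → S.Critical n c →
      Setup.dim c ≤ (n + (S.G.edgeSet \ S.T.edgeSet).ncard) / 2 := by
  intro c hcell hcrit
  classical
  have hall : ∀ v, ¬ S.Unblocked c v := by
    intro v hv
    rcases S.redundant_or_collapsible hcell ⟨v, hv⟩ with h | h
    · exact hcrit.1 h
    · exact hcrit.2 h
  have hnoOR : ∀ e : Sym2 V, ¬ S.OrderResp c e := by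
    intro e0 he0
    have hne : (c.filter (fun e' => S.OrderResp c e')).Nonempty :=
      ⟨e0, Finset.mem_filter.mpr ⟨he0.1, he0⟩⟩
    obtain ⟨e, he, hemin⟩ := S.exists_vle_min _ S.iota hne
    have horr : S.OrderResp c e := (Finset.mem_filter.mp he).2
    exact hcrit.2 (S.collapsible_of_min_orderResp hcell hall horr
      (fun e' h' => hemin e' (Finset.mem_filter.mpr ⟨h'.1, h'⟩)))
  set A := c.filter (fun s => ¬ s.IsDiag ∧ s ∈ S.T.edgeSet) with hA
  set B := c.filter (fun s => ¬ s.IsDiag ∧ s ∉ S.T.edgeSet) with hBdef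
  set Dv := c.filter (fun s => s.IsDiag) with hD
  have hwit : ∀ e : Sym2 V, ∃ u : V,
      e ∈ A → (u ≠ S.root ∧ Sym2.diag u ∈ c ∧ S.tau e = S.par u) := by
    intro e
    by_cases heA : e ∈ A
    · rw [hA, Finset.mem_filter] at heA
      obtain ⟨hec, hnd, heT⟩ := heA
      have hnor := hnoOR e
      rw [Setup.OrderResp] at hnor
      push_neg at hnor
      obtain ⟨u, hu1, hu2, hu3, _⟩ := hnor hec heT
      rw [S.mem_eV] at hu3
      rcases hu3 with h | h
      · exfalso
        have htaue : S.tau e ∈ e := (S.iota_tau_edge heT).2.2.2.1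
        have hd := S.cell_disjoint hcell hu2 hec (x := u) (Setup.mem_diag_iff.mpr rfl) (h ▸ htaue)
        exact (S.edge_not_isDiag heT) (hd ▸ Sym2.diag_isDiag u)
      · exact ⟨u, fun _ => ⟨hu1, hu2, h⟩⟩
    · exact ⟨S.root, fun h => absurd h heA⟩
  choose wit hwit using hwit
  have hmap : ∀ e ∈ A, Sym2.diag (wit e) ∈ Dv := fun e he =>
    Finset.mem_filter.mpr ⟨(hwit e he).2.1, Sym2.diag_isDiag _⟩
  have hinj : Set.InjOn (fun e => Sym2.diag (wit e)) ↑A := by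
    intro e he e' he' h
    rw [Finset.mem_coe] at he he'
    simp only at h
    have h1 := hwit e he
    have h2 := hwit e' he'
    have hu : wit e = wit e' := Sym2.diag_injective h
    have ht : S.tau e = S.tau e' := by rw [h1.2.2, hu, ← h2.2.2]
    rw [hA, Finset.mem_filter] at he he'
    have htaue : S.tau e ∈ e := (S.iota_tau_edge he.2.2).2.2.2.1
    have htaue' : S.tau e' ∈ e' := (S.iota_tau_edge he'.2.2).2.2.2.1
    exact S.cell_disjoint hcell he.1 he'.1 htaue (ht ▸ htaue')
  have hcard1 : A.card ≤ Dv.card := Finset.card_le_card_of_injOn _ hmap hinj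
  have hcard2 : Dv.card + (c.filter (fun s => ¬ s.IsDiag)).card = n := by
    rw [← hcell.1, hD]
    exact Finset.card_filter_add_card_filter_not (p := fun s : Sym2 V => s.IsDiag)
  have hcard3 : A.card + B.card = (c.filter (fun s => ¬ s.IsDiag)).card := by
    rw [hA, hBdef]
    have e1 : c.filter (fun s => ¬ s.IsDiag ∧ s ∈ S.T.edgeSet)
        = (c.filter (fun s => ¬ s.IsDiag)).filter (fun s => s ∈ S.T.edgeSet) := by
      rw [Finset.filter_filter]
    have e2 : c.filter (fun s => ¬ s.IsDiag ∧ s ∉ S.T.edgeSet)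
        = (c.filter (fun s => ¬ s.IsDiag)).filter (fun s => s ∉ S.T.edgeSet) := by
      rw [Finset.filter_filter]
    rw [e1, e2]
    exact Finset.card_filter_add_card_filter_not (p := fun s : Sym2 V => s ∈ S.T.edgeSet)
  have hdim : Setup.dim c = A.card + B.card := by
    rw [Setup.dim, hcard3]
  have hBcard : B.card ≤ (S.G.edgeSet \ S.T.edgeSet).ncard := by
    have hsub : ↑B ⊆ (S.G.edgeSet \ S.T.edgeSet) := by
      intro s hs
      rw [Finset.mem_coe, hBdef, Finset.mem_filter] at hs
      obtain ⟨hsc, hnd, hnT⟩ := hs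
      refine ⟨?_, hnT⟩
      rcases hcell.2.1 s hsc with h | h
      · exact absurd h hnd
      · exact h
    calc B.card = (↑B : Set (Sym2 V)).ncard := (Set.ncard_coe_finset B).symm
      _ ≤ _ := Set.ncard_le_ncard hsub (Set.toFinite _)
  rw [Nat.le_div_iff_mul_le (by norm_num : 0 < 2)]
  omega

end GraphBraid
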